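/- arXiv:2203.03261 — 2 statements merged into one kernel-verified Lean document; each statement's English description precedes it below -/
import Mathlib

section
/- Let Δ be a set of seven triangles in F satisfying the Fano axioms. Then there exists a unique multiplication factor ε such that (O_F, 1, ε) is a composition algebra and Δ = {←P : P ∈ F}. -/
open Finset

/-- The ambient `𝔽₂`-vector space (the Fano cube); the Fano plane `F` is its set of
nonzero vectors. -/
abbrev V : Type := Fin 3 → ZMod 2

/-- A multiplication factor: a sign `ε P Q ∈ {−1,1}` for each ordered pair `(P,Q)` of
distinct points of the Fano plane with `ε Q P = −ε P Q`, normalised to `0` outside its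
domain of definition. -/
def IsMulFactor (ε : V → V → ℤ) : Prop :=
  (∀ P Q : V, P ≠ 0 → Q ≠ 0 → P ≠ Q → (ε P Q = 1 ∨ ε P Q = -1) ∧ ε Q P = -ε P Q) ∧
  (∀ P Q : V, P = 0 ∨ Q = 0 ∨ P = Q → ε P Q = 0)

/-- A norm on the Fano plane: a map to `{−1,1}` multiplicative on pairs of distinct points. -/
def IsNorm (N : V → ℤ) : Prop :=
  (∀ P : V, P ≠ 0 → N P = 1 ∨ N P = -1) ∧
  (∀ P Q : V, P ≠ 0 → Q ≠ 0 → P ≠ Q → N (P + Q) = N P * N Q)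

/-- A line of the Fano plane: a 3-element set `{P,Q,R}` of nonzero vectors with `P+Q+R=0`. -/
def IsLine (L : Set V) : Prop :=
  ∃ P Q R : V, P ≠ 0 ∧ Q ≠ 0 ∧ R ≠ 0 ∧ P ≠ Q ∧ P ≠ R ∧ Q ≠ R ∧
    P + Q + R = 0 ∧ L = {P, Q, R}

/-- A triangle: a 3-element subset of the Fano plane which is not a line. -/
def IsTriangle (T : Set V) : Prop :=
  ∃ P Q R : V, P ≠ 0 ∧ Q ≠ 0 ∧ R ≠ 0 ∧ P ≠ Q ∧ P ≠ R ∧ Q ≠ R ∧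
    P + Q + R ≠ 0 ∧ T = {P, Q, R}

/-- A quadrilateral: a 4-element subset of the Fano plane containing no line. -/
def IsQuad (S : Set V) : Prop :=
  (∃ P Q R T : V, P ≠ 0 ∧ Q ≠ 0 ∧ R ≠ 0 ∧ T ≠ 0 ∧
    P ≠ Q ∧ P ≠ R ∧ P ≠ T ∧ Q ≠ R ∧ Q ≠ T ∧ R ≠ T ∧ S = {P, Q, R, T}) ∧
  (∀ L : Set V, IsLine L → ¬ L ⊆ S)

/-- The future of a point `P`: the points `Q` of the Fano plane with `ε P Q = 1`. -/
def Future (ε : V → V → ℤ) (P : V) : Set V := {Q : V | Q ≠ 0 ∧ Q ≠ P ∧ ε P Q = 1}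

/-- The past of a point `P`: the points `Q` of the Fano plane with `ε P Q = −1`. -/
def Past (ε : V → V → ℤ) (P : V) : Set V := {Q : V | Q ≠ 0 ∧ Q ≠ P ∧ ε P Q = -1}

/-- The composition conditions (C1) and (C2) on a multiplication factor. -/
def CompCond (ε : V → V → ℤ) : Prop :=
  (∀ P Q R : V, P ≠ 0 → Q ≠ 0 → R ≠ 0 → P ≠ Q → P ≠ R → Q ≠ R → P + Q + R = 0 →
    ε P Q * ε Q R = 1) ∧
  (∀ P Q R S : V, P ≠ 0 → Q ≠ 0 → R ≠ 0 → S ≠ 0 →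
    P ≠ Q → P ≠ R → P ≠ S → Q ≠ R → Q ≠ S → R ≠ S → IsQuad {P, Q, R, S} →
    ε P Q * ε Q R * ε R S * ε S P = -1)

/-- An oriented triangle `{P,Q,R}`: one with `ε P Q = ε Q R = ε R P`. -/
def OrientedTri (ε : V → V → ℤ) (T : Set V) : Prop :=
  ∃ P Q R : V, T = {P, Q, R} ∧ P ≠ Q ∧ P ≠ R ∧ Q ≠ R ∧
    ε P Q = ε Q R ∧ ε Q R = ε R P

/-- `P` is the distinguished point of the quadrilateral `S`: the point of `S` whose
complement in `S` is the oriented triangle of `S`. -/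
def IsDistPt (ε : V → V → ℤ) (S : Set V) (P : V) : Prop :=
  P ∈ S ∧ IsTriangle (S \ {P}) ∧ OrientedTri ε (S \ {P})

/-- A family of subsets of the Fano plane satisfies the Fano axioms if two distinct points
lie in exactly one member and two distinct members meet in exactly one point. -/
def FanoFamily (Δ : Set (Set V)) : Prop :=
  (∀ P Q : V, P ≠ 0 → Q ≠ 0 → P ≠ Q → ∃! T, T ∈ Δ ∧ P ∈ T ∧ Q ∈ T) ∧
  (∀ T₁ T₂ : Set V, T₁ ∈ Δ → T₂ ∈ Δ → T₁ ≠ T₂ → ∃! X : V, X ∈ T₁ ∩ T₂)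

/-- An `n`-oriented map: `α_P(P) + n(P) = 1` on the Fano plane and
`α_P(Q) + α_Q(P) = 1` for distinct points; normalised by `α 0 = 0`. -/
def IsNOrientedMap (n : V →ₗ[ZMod 2] ZMod 2) (α : V → V →ₗ[ZMod 2] ZMod 2) : Prop :=
  (∀ P : V, P ≠ 0 → α P P + n P = 1) ∧
  (∀ P Q : V, P ≠ 0 → Q ≠ 0 → P ≠ Q → α P Q + α Q P = 1) ∧
  α 0 = 0

/-- An oriented map is a `0`-oriented map. -/
def IsOrientedMap (α : V → V →ₗ[ZMod 2] ZMod 2) : Prop := IsNOrientedMap 0 α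

/-- The exponential `e : ZMod 2 → {−1,1}`, `e^0 = 1`, `e^1 = −1`. -/
def eSign (x : ZMod 2) : ℤ := if x = 0 then 1 else -1

/-- The multiplication factor `e^α` associated to an (`n`-)oriented map `α`. -/
def expMap (α : V → V →ₗ[ZMod 2] ZMod 2) : V → V → ℤ :=
  fun P Q => if P ≠ 0 ∧ Q ≠ 0 ∧ P ≠ Q then eSign (α P Q) else 0

/-- The set `Δ_P = {Q ∈ F : Q ≠ P, α_P(Q) = 1}` associated to an oriented map. -/
def DeltaSet (α : V → V →ₗ[ZMod 2] ZMod 2) (P : V) : Set V :=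
  {Q : V | Q ≠ 0 ∧ Q ≠ P ∧ α P Q = 1}

/-- The map `α ↦ α′`, `α′_P = α_P + n(P)·n`. -/
def nTransform (n : V →ₗ[ZMod 2] ZMod 2) (α : V → V →ₗ[ZMod 2] ZMod 2) :
    V → V →ₗ[ZMod 2] ZMod 2 :=
  fun P => α P + n P • n

/-- The norm `e^{n}` on the Fano plane associated to a linear form `n`. -/
def NormOf (n : V →ₗ[ZMod 2] ZMod 2) : V → ℤ := fun P => eSign (n P)

/-- Structure constants of the octonion-type multiplication on `O_F` determined by a norm `N`
and a multiplication factor `ε`: `e_0` is a two-sided unit, `e_P ⬝ e_P = −N(P) e_0` and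
`e_P ⬝ e_Q = ε_{PQ} e_{P+Q}` for distinct points `P`, `Q` of the Fano plane. -/
def structC (𝔽 : Type*) [Field 𝔽] (N : V → ℤ) (ε : V → V → ℤ) (P Q : V) : 𝔽 :=
  if P = 0 ∨ Q = 0 then 1
  else if P = Q then -(N P : 𝔽)
  else (ε P Q : 𝔽)

/-- The bilinear multiplication on `O_F = (V → 𝔽)` with the above structure constants
(in `V` we have `X = Y + Z ↔ Z = X + Y`). -/
def octMul (𝔽 : Type*) [Field 𝔽] (N : V → ℤ) (ε : V → V → ℤ) (Z W : V → 𝔽) : V → 𝔽 :=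
  fun X => ∑ Y : V, structC 𝔽 N ε Y (X + Y) * Z Y * W (X + Y)

/-- The quadratic form `N_O` on `O_F`. -/
def octNorm (𝔽 : Type*) [Field 𝔽] (N : V → ℤ) (Z : V → 𝔽) : 𝔽 :=
  ∑ X : V, (if X = 0 then 1 else (N X : 𝔽)) * Z X ^ 2

/-- `(O_F, N, ε)` is a composition algebra: `N_O(Z ⬝ W) = N_O(Z) N_O(W)`. -/
def IsCompAlg (𝔽 : Type*) [Field 𝔽] (N : V → ℤ) (ε : V → V → ℤ) : Prop :=
  ∀ Z W : V → 𝔽, octNorm 𝔽 N (octMul 𝔽 N ε Z W) = octNorm 𝔽 N Z * octNorm 𝔽 N W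


/-! ### Auxiliary machinery -/

lemma vadd_self (x : V) : x + x = 0 := by
  funext i; exact (by decide : ∀ z : ZMod 2, z + z = 0) _

lemma vcancel {x y : V} (h : x + y = 0) : x = y := by
  have := congrArg (· + y) h
  simpa [add_assoc, vadd_self] using this

lemma vshift (x y : V) : x + y + y = x := by
  rw [add_assoc, vadd_self, add_zero]

open Classical in
noncomputable def indP (p : Prop) : ZMod 2 := if p then 1 else 0

lemma indP_true {p : Prop} (h : p) : indP p = 1 := by simp [indP, h]
lemma indP_false {p : Prop} (h : ¬ p) : indP p = 0 := by simp [indP, h]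

lemma indP_eq_self (z : ZMod 2) : indP (z = 1) = z := by
  rcases (by decide : ∀ w : ZMod 2, w = 0 ∨ w = 1) z with h | h <;> subst h
  · rw [indP_false] <;> decide
  · rw [indP_true rfl]

lemma sign2 {p q : Prop} [Decidable p] [Decidable q] (h : indP p + indP q = 1) :
    (if p then (-1:ℤ) else 1) + (if q then -1 else 1) = 0 := by
  by_cases hp : p <;> by_cases hq : q <;>
    simp only [indP, hp, hq, if_true, if_false, ite_true, ite_false] at h ⊢ <;>
    revert h <;> decide

lemma sign4 {p q r s : Prop} [Decidable p] [Decidable q] [Decidable r] [Decidable s]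
    (h : indP p + indP q + indP r + indP s = 1) :
    (if p then (-1:ℤ) else 1) * (if q then -1 else 1)
      + (if r then -1 else 1) * (if s then -1 else 1) = 0 := by
  by_cases hp : p <;> by_cases hq : q <;> by_cases hr : r <;> by_cases hs : s <;>
    simp only [indP, hp, hq, hr, hs, if_true, if_false, ite_true, ite_false] at h ⊢ <;>
    revert h <;> decide

def gmap (a b c : V) (r : Fin 3 → ZMod 2) : V := r 0 • a + r 1 • b + r 2 • c

lemma coeff_char : ∀ r : Fin 3 → ZMod 2,
    (r = ![1,0,0] ∨ r = ![0,1,0] ∨ r = ![0,0,1] ∨ r = ![1,1,1]) ↔ r 0 + r 1 + r 2 = 1 := by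
  decide

section Basis
variable {a b c : V} (ha : a ≠ 0) (hb : b ≠ 0) (hc : c ≠ 0)
  (hab : a ≠ b) (hac : a ≠ c) (hbc : b ≠ c) (hs : a + b + c ≠ 0)

include ha hb hc hab hac hbc hs in
lemma gmap_inj : Function.Injective (gmap a b c) := by
  have key : ∀ r : Fin 3 → ZMod 2, gmap a b c r = 0 → r = 0 := by
    intro r hr
    have h2 : ∀ z : ZMod 2, z = 0 ∨ z = 1 := by decide
    have hab' : a + b ≠ 0 := fun h => hab (vcancel h)
    have hac' : a + c ≠ 0 := fun h => hac (vcancel h)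
    have hbc' : b + c ≠ 0 := fun h => hbc (vcancel h)
    rcases h2 (r 0) with h0 | h0 <;> rcases h2 (r 1) with h1 | h1 <;>
      rcases h2 (r 2) with h2' | h2' <;>
      simp only [gmap, h0, h1, h2', zero_smul, one_smul, zero_add, add_zero] at hr <;>
      first
      | exact absurd hr (by assumption)
      | (funext i; fin_cases i <;> simp [h0, h1, h2'])
  intro r s hrs
  have : gmap a b c (r + s) = 0 := by
    simp only [gmap, add_smul, Pi.add_apply] at hrs ⊢
    rw [show r 0 • a + s 0 • a + (r 1 • b + s 1 • b) + (r 2 • c + s 2 • c)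
      = (r 0 • a + r 1 • b + r 2 • c) + (s 0 • a + s 1 • b + s 2 • c) by abel, hrs]
    exact vadd_self _
  have := key _ this
  funext i
  have : r i + s i = 0 := by
    have := congrFun this i; simpa using this
  exact (by decide : ∀ u v : ZMod 2, u + v = 0 → u = v) _ _ this

include ha hb hc hab hac hbc hs in
lemma gmap_surj : Function.Surjective (gmap a b c) :=
  Finite.surjective_of_injective (gmap_inj ha hb hc hab hac hbc hs)

include ha hb hc hab hac hbc hs in
lemma eight (x : V) : x = 0 ∨ x = a ∨ x = b ∨ x = c ∨ x = a + b ∨ x = a + c ∨ x = b + c ∨ x = a + b + c := by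
  obtain ⟨r, rfl⟩ := gmap_surj ha hb hc hab hac hbc hs x
  have h2 : ∀ z : ZMod 2, z = 0 ∨ z = 1 := by decide
  rcases h2 (r 0) with h0 | h0 <;> rcases h2 (r 1) with h1 | h1 <;>
    rcases h2 (r 2) with h2' | h2' <;>
    simp [gmap, h0, h1, h2'] <;> tauto

include ha hb hc hab hac hbc hs in
lemma mem_coset_iff (r : Fin 3 → ZMod 2) :
    gmap a b c r ∈ ({a, b, c, a + b + c} : Set V) ↔ r 0 + r 1 + r 2 = 1 := by
  have inj := gmap_inj ha hb hc hab hac hbc hs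
  have e1 : a = gmap a b c ![1,0,0] := by simp [gmap]
  have e2 : b = gmap a b c ![0,1,0] := by simp [gmap]
  have e3 : c = gmap a b c ![0,0,1] := by simp [gmap]
  have e4 : a + b + c = gmap a b c ![1,1,1] := by simp [gmap]
  have h : gmap a b c r ∈ ({a, b, c, a + b + c} : Set V) ↔
      (r = ![1,0,0] ∨ r = ![0,1,0] ∨ r = ![0,0,1] ∨ r = ![1,1,1]) := by
    rw [show ({a, b, c, a + b + c} : Set V) =
      {gmap a b c ![1,0,0], gmap a b c ![0,1,0], gmap a b c ![0,0,1], gmap a b c ![1,1,1]} by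
        rw [← e1, ← e2, ← e3, ← e4]]
    simp only [Set.mem_insert_iff, Set.mem_singleton_iff, inj.eq_iff]
  rw [h, coeff_char r]

include ha hb hc hab hac hbc hs in
lemma indP_coset (x y : V) :
    indP (x + y ∈ ({a, b, c, a + b + c} : Set V)) =
      indP (x ∈ ({a, b, c, a + b + c} : Set V)) + indP (y ∈ ({a, b, c, a + b + c} : Set V)) := by
  obtain ⟨r, rfl⟩ := gmap_surj ha hb hc hab hac hbc hs x
  obtain ⟨s, rfl⟩ := gmap_surj ha hb hc hab hac hbc hs y
  have hadd : gmap a b c r + gmap a b c s = gmap a b c (r + s) := by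
    simp only [gmap, add_smul, Pi.add_apply]; abel
  rw [hadd, mem_coset_iff ha hb hc hab hac hbc hs, mem_coset_iff ha hb hc hab hac hbc hs,
    mem_coset_iff ha hb hc hab hac hbc hs]
  simp only [Pi.add_apply]
  rw [show r 0 + s 0 + (r 1 + s 1) + (r 2 + s 2) = (r 0 + r 1 + r 2) + (s 0 + s 1 + s 2) by ring]
  rw [indP_eq_self, indP_eq_self, indP_eq_self]

end Basis

/-! ### Triangles and sums -/

noncomputable def sumOf (S : Set V) : V := ∑ x ∈ S.toFinite.toFinset, x

lemma sumOf_triple {x y z : V} (hxy : x ≠ y) (hxz : x ≠ z) (hyz : y ≠ z) :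
    sumOf ({x, y, z} : Set V) = x + y + z := by
  unfold sumOf
  rw [show (({x, y, z} : Set V).toFinite.toFinset) = ({x, y, z} : Finset V) by
    ext w; simp]
  rw [Finset.sum_insert (by simp [hxy, hxz]), Finset.sum_pair hyz, add_assoc]

lemma sum3_ne_fst {x y z : V} (hyz : y ≠ z) : x + y + z ≠ x := fun h =>
  hyz (vcancel (add_left_cancel (a := x) (by rw [add_zero, ← add_assoc]; exact h)))

lemma sum3_ne_snd {x y z : V} (hxz : x ≠ z) : x + y + z ≠ y := fun h =>
  hxz (vcancel (add_left_cancel (a := y) (by rw [add_zero, show y + (x+z) = x+y+z by abel]; exact h)))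

lemma sum3_ne_thd {x y z : V} (hxy : x ≠ y) : x + y + z ≠ z := fun h =>
  hxy (vcancel (add_left_cancel (a := z) (by rw [add_zero, show z + (x+y) = x+y+z by abel]; exact h)))

lemma tri_rep_mem {T : Set V} (hT : IsTriangle T) {x : V} (hx : x ∈ T) :
    ∃ y z : V, x ≠ 0 ∧ y ≠ 0 ∧ z ≠ 0 ∧ x ≠ y ∧ x ≠ z ∧ y ≠ z ∧ x + y + z ≠ 0 ∧
      T = {x, y, z} := by
  obtain ⟨P, Q, R, hP, hQ, hR, hPQ, hPR, hQR, hsum, rfl⟩ := hT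
  rcases hx with rfl | rfl | rfl
  · exact ⟨Q, R, hP, hQ, hR, hPQ, hPR, hQR, hsum, rfl⟩
  · refine ⟨P, R, hQ, hP, hR, hPQ.symm, hQR, hPR, ?_, by ext w; simp; tauto⟩
    rw [show x + P + R = P + x + R by abel]; exact hsum
  · refine ⟨P, Q, hR, hP, hQ, hPR.symm, hQR.symm, hPQ, ?_, by ext w; simp; tauto⟩
    rw [show x + P + Q = P + Q + x by abel]; exact hsum

lemma tri_rep_mem2 {T : Set V} (hT : IsTriangle T) {x y : V} (hx : x ∈ T) (hy : y ∈ T)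
    (hxy : x ≠ y) :
    ∃ z : V, x ≠ 0 ∧ y ≠ 0 ∧ z ≠ 0 ∧ x ≠ z ∧ y ≠ z ∧ x + y + z ≠ 0 ∧ T = {x, y, z} := by
  obtain ⟨u, v, hx0, hu0, hv0, hxu, hxv, huv, hsum, hrep⟩ := tri_rep_mem hT hx
  rw [hrep] at hy
  rcases hy with rfl | rfl | rfl
  · exact absurd rfl hxy
  · exact ⟨v, hx0, hu0, hv0, hxv, huv, hsum, hrep⟩
  · refine ⟨u, hx0, hv0, hu0, hxu, huv.symm, ?_, by rw [hrep]; ext w; simp; tauto⟩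
    rw [show x + y + u = x + u + y by abel]; exact hsum

lemma tri_mem_ne_zero {T : Set V} (hT : IsTriangle T) {x : V} (hx : x ∈ T) : x ≠ 0 :=
  (tri_rep_mem hT hx).choose_spec.choose_spec.1

lemma tri_sumOf_ne_zero {T : Set V} (hT : IsTriangle T) : sumOf T ≠ 0 := by
  obtain ⟨P, Q, R, hP, hQ, hR, hPQ, hPR, hQR, hsum, rfl⟩ := hT
  rw [sumOf_triple hPQ hPR hQR]; exact hsum

lemma tri_sumOf_notMem {T : Set V} (hT : IsTriangle T) : sumOf T ∉ T := by
  obtain ⟨P, Q, R, hP, hQ, hR, hPQ, hPR, hQR, hsum, rfl⟩ := hT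
  rw [sumOf_triple hPQ hPR hQR]
  rintro (h | h | h)
  · exact sum3_ne_fst hQR h
  · exact sum3_ne_snd hPR h
  · exact sum3_ne_thd hPQ h

/-! ### Integer structure constants -/

def cInt (ε : V → V → ℤ) (P Q : V) : ℤ :=
  if P = 0 ∨ Q = 0 then 1 else if P = Q then -1 else ε P Q

section Algebra
variable {𝔽 : Type*} [Field 𝔽] {ε : V → V → ℤ}

lemma octNorm_one (Z : V → 𝔽) : octNorm 𝔽 (fun _ => 1) Z = ∑ X : V, Z X ^ 2 := by
  unfold octNorm; apply Finset.sum_congr rfl; intro X _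
  split <;> simp

lemma structC_cast (P Q : V) :
    structC 𝔽 (fun _ => 1) ε P Q = ((cInt ε P Q : ℤ) : 𝔽) := by
  unfold structC cInt
  split
  · simp
  · split
    · push_cast; ring
    · rfl

lemma cInt_sq (hmf : IsMulFactor ε) (P Q : V) :
    cInt ε P Q * cInt ε P Q = 1 := by
  unfold cInt
  split
  · ring
  · split
    · ring
    · rename_i h1 h2
      push_neg at h1
      rcases (hmf.1 P Q h1.1 h1.2 h2).1 with h | h <;> rw [h] <;> ring

theorem comp_of_H (hmf : IsMulFactor ε)
    (hH : ∀ A B C D : V, A ≠ B → A + B = C + D →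
      cInt ε A C * cInt ε B D + cInt ε A D * cInt ε B C = 0) :
    IsCompAlg 𝔽 (fun _ => 1) ε := by
  intro Z W
  set c : V → V → 𝔽 := structC 𝔽 (fun _ => 1) ε with hc
  have key : ∀ Y Y' : V, Y ≠ Y' →
      ∑ X : V, (c Y (X + Y) * Z Y * W (X + Y)) * (c Y' (X + Y') * Z Y' * W (X + Y')) = 0 := by
    intro Y Y' hYY'
    apply Finset.sum_involution (fun X _ => X + Y + Y')
    · intro X _
      have h1 : X + Y + Y' + Y = X + Y' := by
        rw [show X + Y + Y' + Y = X + Y' + (Y + Y) by abel, vadd_self, add_zero]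
      have h2 : X + Y + Y' + Y' = X + Y := by
        rw [show X + Y + Y' + Y' = X + Y + (Y' + Y') by abel, vadd_self, add_zero]
      rw [h1, h2]
      have hsum : Y + Y' = (X + Y) + (X + Y') := by
        rw [show (X + Y) + (X + Y') = (X + X) + (Y + Y') by abel, vadd_self, zero_add]
      have := hH Y Y' (X + Y) (X + Y') hYY' hsum
      have hcast : (c Y (X+Y)) * (c Y' (X+Y')) + (c Y (X+Y')) * (c Y' (X+Y)) = 0 := by
        rw [hc, structC_cast, structC_cast, structC_cast, structC_cast,
          ← Int.cast_mul, ← Int.cast_mul, ← Int.cast_add, this, Int.cast_zero]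
      linear_combination (Z Y * Z Y' * W (X + Y) * W (X + Y')) * hcast
    · intro X _ _ h
      apply hYY'
      apply vcancel
      have h2 : X + (Y + Y') = X + 0 := by rw [add_zero, ← add_assoc]; exact h
      exact add_left_cancel h2
    · intro X _; exact Finset.mem_univ _
    · intro X _
      rw [show X + Y + Y' + Y + Y' = X + (Y+Y) + (Y'+Y') by abel, vadd_self, vadd_self,
        add_zero, add_zero]
  have diag : ∀ Y : V, ∑ X : V, (c Y (X + Y) * Z Y * W (X + Y)) ^ 2
      = Z Y ^ 2 * ∑ X : V, W X ^ 2 := by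
    intro Y
    have : ∀ X : V, (c Y (X + Y) * Z Y * W (X + Y)) ^ 2 = Z Y ^ 2 * W (X + Y) ^ 2 := by
      intro X
      have h1 : c Y (X + Y) * c Y (X + Y) = 1 := by
        rw [hc, structC_cast, ← Int.cast_mul, cInt_sq hmf]; exact Int.cast_one
      rw [show (c Y (X + Y) * Z Y * W (X + Y)) ^ 2
        = (c Y (X + Y) * c Y (X + Y)) * (Z Y ^ 2 * W (X + Y) ^ 2) by ring, h1, one_mul]
    rw [Finset.sum_congr rfl (fun X _ => this X), ← Finset.mul_sum]
    congr 1
    exact Fintype.sum_equiv (Equiv.addRight Y) _ _ (fun X => rfl)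
  calc octNorm 𝔽 (fun _ => 1) (octMul 𝔽 (fun _ => 1) ε Z W)
      = ∑ X : V, (∑ Y : V, c Y (X + Y) * Z Y * W (X + Y)) ^ 2 := by
        rw [octNorm_one]; rfl
    _ = ∑ X : V, ∑ Y : V, ∑ Y' : V,
        (c Y (X + Y) * Z Y * W (X + Y)) * (c Y' (X + Y') * Z Y' * W (X + Y')) := by
        apply Finset.sum_congr rfl; intro X _
        rw [sq, Finset.sum_mul_sum]
    _ = ∑ Y : V, ∑ Y' : V, ∑ X : V,
        (c Y (X + Y) * Z Y * W (X + Y)) * (c Y' (X + Y') * Z Y' * W (X + Y')) := by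
        rw [Finset.sum_comm]
        apply Finset.sum_congr rfl; intro Y _
        rw [Finset.sum_comm]
    _ = ∑ Y : V, ∑ X : V, (c Y (X + Y) * Z Y * W (X + Y)) ^ 2 := by
        apply Finset.sum_congr rfl; intro Y _
        rw [← Finset.sum_erase_add _ _ (Finset.mem_univ Y)]
        rw [Finset.sum_eq_zero, zero_add]
        · apply Finset.sum_congr rfl; intro X _; rw [sq]
        · intro Y' hY'
          exact key Y Y' (fun h => (Finset.mem_erase.1 hY').1 h.symm)
    _ = (∑ Y : V, Z Y ^ 2) * (∑ X : V, W X ^ 2) := by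
        rw [Finset.sum_congr rfl (fun Y _ => diag Y), ← Finset.sum_mul]
    _ = octNorm 𝔽 (fun _ => 1) Z * octNorm 𝔽 (fun _ => 1) W := by
        rw [octNorm_one, octNorm_one]
end Algebra

section Ext
variable {𝔽 : Type*} [Field 𝔽] {ε : V → V → ℤ}

theorem eps_line (hchar : (2:𝔽) ≠ 0) (hmf : IsMulFactor ε)
    (hca : IsCompAlg 𝔽 (fun _ => 1) ε)
    {P Q : V} (hP : P ≠ 0) (hQ : Q ≠ 0) (hPQ : P ≠ Q) : ε P Q = - ε P (P + Q) := by
  have hPQ0 : P + Q ≠ 0 := fun h => hPQ (vcancel h)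
  have hQPQ : Q ≠ P + Q := by
    intro h; apply hP
    have : P + Q = 0 + Q := by rw [← h, zero_add]
    exact add_right_cancel this
  have hPPQ : P ≠ P + Q := by
    intro h; apply hQ
    have : P + 0 = P + Q := by rw [add_zero]; exact h
    exact (add_left_cancel this).symm
  set Z : V → 𝔽 := fun X => if X = 0 ∨ X = P then 1 else 0 with hZ
  set W : V → 𝔽 := fun X => if X = Q ∨ X = P + Q then 1 else 0 with hW
  have hmul : ∀ X : V, octMul 𝔽 (fun _ => 1) ε Z W X
      = W X + structC 𝔽 (fun _ => 1) ε P (X + P) * W (X + P) := by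
    intro X
    unfold octMul
    rw [show (Finset.univ : Finset V) = {0, P} ∪ (Finset.univ \ {0, P}) by
      rw [Finset.union_sdiff_of_subset (Finset.subset_univ _)]]
    rw [Finset.sum_union (Finset.disjoint_sdiff)]
    rw [Finset.sum_pair hP.symm]
    have hzero : ∑ Y ∈ Finset.univ \ {0, P},
        structC 𝔽 (fun _ => 1) ε Y (X + Y) * Z Y * W (X + Y) = 0 := by
      apply Finset.sum_eq_zero
      intro Y hY
      simp only [Finset.mem_sdiff, Finset.mem_insert, Finset.mem_singleton] at hY
      push_neg at hY
      have : Z Y = 0 := by rw [hZ]; simp [hY.2.1, hY.2.2]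
      rw [this, mul_zero, zero_mul]
    rw [hzero, add_zero]
    have hc0 : structC 𝔽 (fun _ => 1) ε 0 (X + 0) = 1 := by unfold structC; simp
    have hZ0 : Z 0 = 1 := by rw [hZ]; simp
    have hZP : Z P = 1 := by rw [hZ]; simp
    rw [hc0, hZ0, hZP, add_zero, mul_one, one_mul, mul_one]
  have hWQ : W Q = 1 := by rw [hW]; simp
  have hWPQ : W (P + Q) = 1 := by rw [hW]; simp
  have norm2 : ∀ (A B : V), A ≠ B → octNorm 𝔽 (fun _ => 1)
      (fun X => if X = A ∨ X = B then (1:𝔽) else 0) = 2 := by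
    intro A B hAB
    rw [octNorm_one]
    rw [show (Finset.univ : Finset V) = {A, B} ∪ (Finset.univ \ {A, B}) by
      rw [Finset.union_sdiff_of_subset (Finset.subset_univ _)]]
    rw [Finset.sum_union (Finset.disjoint_sdiff), Finset.sum_pair hAB]
    rw [Finset.sum_eq_zero (fun Y hY => by
      simp only [Finset.mem_sdiff, Finset.mem_insert, Finset.mem_singleton] at hY
      push_neg at hY
      simp [hY.2.1, hY.2.2])]
    norm_num
  have hnZ : octNorm 𝔽 (fun _ => 1) Z = 2 := norm2 0 P hP.symm
  have hnW : octNorm 𝔽 (fun _ => 1) W = 2 := norm2 Q (P+Q) hQPQ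
  have E := hca Z W
  rw [hnZ, hnW, octNorm_one] at E
  rw [Finset.sum_congr rfl (fun X _ => by rw [hmul X])] at E
  rw [show (Finset.univ : Finset V) = {Q, P + Q} ∪ (Finset.univ \ {Q, P + Q}) by
      rw [Finset.union_sdiff_of_subset (Finset.subset_univ _)]] at E
  rw [Finset.sum_union (Finset.disjoint_sdiff), Finset.sum_pair hQPQ] at E
  rw [Finset.sum_eq_zero (fun Y hY => by
    simp only [Finset.mem_sdiff, Finset.mem_insert, Finset.mem_singleton] at hY
    push_neg at hY
    have hw1 : W Y = 0 := by rw [hW]; simp [hY.2.1, hY.2.2]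
    have n1 : Y + P ≠ Q := fun h => hY.2.2 (by rw [← vshift Y P, h, add_comm])
    have n2 : Y + P ≠ P + Q := fun h => hY.2.1 (by rw [← vshift Y P, h, add_comm P Q, vshift])
    have hw2 : W (Y + P) = 0 := by rw [hW]; simp [n1, n2]
    rw [hw1, hw2, mul_zero, add_zero]; ring), add_zero] at E
  rw [add_comm Q P] at E
  rw [show P + Q + P = Q by rw [add_comm P Q, vshift]] at E
  rw [hWQ, hWPQ] at E
  have hcPQ : structC 𝔽 (fun _ => 1) ε P (P + Q) = ((ε P (P + Q) : ℤ) : 𝔽) := by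
    unfold structC
    rw [if_neg (by push_neg; exact ⟨hP, hPQ0⟩), if_neg hPPQ]
  have hcQ : structC 𝔽 (fun _ => 1) ε P Q = ((ε P Q : ℤ) : 𝔽) := by
    unfold structC
    rw [if_neg (by push_neg; exact ⟨hP, hQ⟩), if_neg hPQ]
  rw [hcPQ, hcQ] at E
  have h4 : (2:𝔽) * 2 ≠ 0 := mul_ne_zero hchar hchar
  rcases (hmf.1 P (P + Q) hP hPQ0 hPPQ).1 with h1 | h1 <;>
    rcases (hmf.1 P Q hP hQ hPQ).1 with h2 | h2 <;> rw [h1, h2] at E <;> rw [h1, h2]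
  all_goals first
    | decide
    | (exfalso; apply h4; push_cast at E; linear_combination E)
    | (exfalso; apply h4; push_cast at E; linear_combination -E)
end Ext

/-- any set of seven triangles satisfying the Fano axioms is the set of
pasts of a unique multiplication factor making `(O_F, 1, ε)` a composition algebra. -/
theorem stmt_16 (𝔽 : Type*) [Field 𝔽] (hchar : (2 : 𝔽) ≠ 0)
    (Δ : Set (Set V)) (hcard : Δ.ncard = 7)
    (htri : ∀ T ∈ Δ, IsTriangle T) (hfano : FanoFamily Δ) :
    ∃! ε : V → V → ℤ, IsMulFactor ε ∧ IsCompAlg 𝔽 (fun _ => 1) ε ∧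
      Δ = {S : Set V | ∃ P : V, P ≠ 0 ∧ S = Past ε P} := by
  classical
  have hsumNe : ∀ T ∈ Δ, sumOf T ≠ 0 := fun T hT => tri_sumOf_ne_zero (htri T hT)
  have hsumNM : ∀ T ∈ Δ, sumOf T ∉ T := fun T hT => tri_sumOf_notMem (htri T hT)
  -- (F2) sumOf is injective on Δ
  have hinj : ∀ T₁ ∈ Δ, ∀ T₂ ∈ Δ, sumOf T₁ = sumOf T₂ → T₁ = T₂ := by
    intro T₁ h₁ T₂ h₂ h12
    by_contra hne
    obtain ⟨x, hx, hxu⟩ := hfano.2 T₁ T₂ h₁ h₂ hne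
    obtain ⟨hx1, hx2⟩ := hx
    obtain ⟨y, z, hx0, hy0, hz0, hxy, hxz, hyz, hsxyz, hT1⟩ := tri_rep_mem (htri T₁ h₁) hx1
    obtain ⟨u, v, _, hu0, hv0, hxu', hxv, huv, hsxuv, hT2⟩ := tri_rep_mem (htri T₂ h₂) hx2
    have hs1 : sumOf T₁ = x + y + z := by rw [hT1, sumOf_triple hxy hxz hyz]
    have hs2 : sumOf T₂ = x + u + v := by rw [hT2, sumOf_triple hxu' hxv huv]
    have hyzuv : y + z = u + v := by
      have : x + (y + z) = x + (u + v) := by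
        rw [← add_assoc, ← add_assoc, ← hs1, ← hs2, h12]
      exact add_left_cancel this
    -- the unique intersection point is x
    have huniq : ∀ w : V, w ∈ T₁ → w ∈ T₂ → w = x := by
      intro w hw1 hw2
      have := hxu w ⟨hw1, hw2⟩
      exact this
    have hyT2 : y ∉ T₂ := fun h => hxy (huniq y (by rw [hT1]; right; left; rfl) h).symm
    have hzT2 : z ∉ T₂ := fun h => hxz (huniq z (by rw [hT1]; right; right; rfl) h).symm
    have huT1 : u ∉ T₁ := fun h => hxu' (huniq u h (by rw [hT2]; right; left; rfl)).symm
    have hvT1 : v ∉ T₁ := fun h => hxv (huniq v h (by rw [hT2]; right; right; rfl)).symm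
    have hw0 : y + z ≠ 0 := fun h => hyz (vcancel h)
    have hxw : x ≠ y + z := by
      intro h
      apply hsxyz
      rw [add_assoc, h]
      exact vadd_self _
    -- the block through x and y+z
    obtain ⟨T₇, ⟨h₇, hx7, hw7⟩, _⟩ := hfano.1 x (y + z) hx0 hw0 hxw
    obtain ⟨r, _, _, hr0, hxr, hwr, hsxwr, hT7⟩ := tri_rep_mem2 (htri T₇ h₇) hx7 hw7 hxw
    -- y, z, u, v are not in T₇
    have hyT7 : y ∉ T₇ := by
      intro h
      obtain ⟨T', hT', hT'u⟩ := hfano.1 x y hx0 hy0 hxy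
      have e1 : T₇ = T' := hT'u T₇ ⟨h₇, hx7, h⟩
      have e2 : T₁ = T' := hT'u T₁ ⟨h₁, hx1, by rw [hT1]; right; left; rfl⟩
      have : y + z ∈ T₁ := by rw [e2, ← e1]; exact hw7
      rw [hT1] at this
      rcases this with h' | h' | h'
      · exact hxw h'.symm
      · exact hz0 (add_left_cancel (show y + z = y + 0 by rw [add_zero]; exact h'))
      · exact hy0 (add_right_cancel (show y + z = 0 + z by rw [zero_add]; exact h'))
    have hzT7 : z ∉ T₇ := by
      intro h
      obtain ⟨T', hT', hT'u⟩ := hfano.1 x z hx0 hz0 hxz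
      have e1 : T₇ = T' := hT'u T₇ ⟨h₇, hx7, h⟩
      have e2 : T₁ = T' := hT'u T₁ ⟨h₁, hx1, by rw [hT1]; right; right; rfl⟩
      have : y + z ∈ T₁ := by rw [e2, ← e1]; exact hw7
      rw [hT1] at this
      rcases this with h' | h' | h'
      · exact hxw h'.symm
      · exact hz0 (add_left_cancel (show y + z = y + 0 by rw [add_zero]; exact h'))
      · exact hy0 (add_right_cancel (show y + z = 0 + z by rw [zero_add]; exact h'))
    have huT7 : u ∉ T₇ := by
      intro h
      obtain ⟨T', hT', hT'u⟩ := hfano.1 x u hx0 hu0 hxu'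
      have e1 : T₇ = T' := hT'u T₇ ⟨h₇, hx7, h⟩
      have e2 : T₂ = T' := hT'u T₂ ⟨h₂, hx2, by rw [hT2]; right; left; rfl⟩
      have hm : y + z ∈ T₂ := by rw [e2, ← e1]; exact hw7
      rw [hT2, hyzuv] at hm
      rcases hm with h' | h' | h'
      · exact hxw (by rw [hyzuv]; exact h'.symm)
      · exact hv0 (add_left_cancel (show u + v = u + 0 by rw [add_zero]; exact h'))
      · exact hu0 (add_right_cancel (show u + v = 0 + v by rw [zero_add]; exact h'))
    have hvT7 : v ∉ T₇ := by
      intro h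
      obtain ⟨T', hT', hT'u⟩ := hfano.1 x v hx0 hv0 hxv
      have e1 : T₇ = T' := hT'u T₇ ⟨h₇, hx7, h⟩
      have e2 : T₂ = T' := hT'u T₂ ⟨h₂, hx2, by rw [hT2]; right; right; rfl⟩
      have hm : y + z ∈ T₂ := by rw [e2, ← e1]; exact hw7
      rw [hT2, hyzuv] at hm
      rcases hm with h' | h' | h'
      · exact hxw (by rw [hyzuv]; exact h'.symm)
      · exact hv0 (add_left_cancel (show u + v = u + 0 by rw [add_zero]; exact h'))
      · exact hu0 (add_right_cancel (show u + v = 0 + v by rw [zero_add]; exact h'))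
    have hrT7 : r ∈ T₇ := by rw [hT7]; right; right; rfl
    have hry : r ≠ y := fun h => hyT7 (h ▸ hrT7)
    have hrz : r ≠ z := fun h => hzT7 (h ▸ hrT7)
    have hru : r ≠ u := fun h => huT7 (h ▸ hrT7)
    have hrv : r ≠ v := fun h => hvT7 (h ▸ hrT7)
    -- u, v ∈ {x+y, x+z}
    have hmemuv : ∀ w : V, w ∈ T₂ → w ≠ x → w = x + y ∨ w = x + z := by
      intro w hwT2 hwx
      have hw0' : w ≠ 0 := tri_mem_ne_zero (htri T₂ h₂) hwT2
      have hwy : w ≠ y := fun h => hyT2 (h ▸ hwT2)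
      have hwz : w ≠ z := fun h => hzT2 (h ▸ hwT2)
      have hwyz : w ≠ y + z := by
        intro h
        -- then w = y + z and w ∈ T₂ = {x,u,v}; w ≠ x; so w = u or v; then the other is 0
        rw [hT2] at hwT2
        rcases hwT2 with h' | h' | h'
        · exact hwx h'
        · subst h'
          apply hv0
          have : w + v = w + 0 := by rw [add_zero, ← hyzuv, ← h]
          exact add_left_cancel this
        · subst h'
          apply hu0
          have : u + w = 0 + w := by rw [zero_add, ← hyzuv, ← h]
          exact add_right_cancel this
      have hwxyz : w ≠ x + y + z := by
        intro h
        rw [← hs1, h12, hs2] at h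
        subst h
        exact (hsumNM T₂ h₂) (by rw [hs2]; exact hwT2)
      rcases eight hx0 hy0 hz0 hxy hxz hyz hsxyz w with h|h|h|h|h|h|h|h
      · exact absurd h hw0'
      · exact absurd h hwx
      · exact absurd h hwy
      · exact absurd h hwz
      · exact Or.inl h
      · exact Or.inr h
      · exact absurd h hwyz
      · exact absurd h hwxyz
    have hu' : u = x + y ∨ u = x + z :=
      hmemuv u (by rw [hT2]; right; left; rfl) (fun h => hxu' h.symm)
    have hv' : v = x + y ∨ v = x + z :=
      hmemuv v (by rw [hT2]; right; right; rfl) (fun h => hxv h.symm)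
    -- r = x + y + z
    have hrfin : r = x + y + z := by
      have hrxy : r ≠ x + y := by
        intro h
        rcases hu' with h' | h' <;> rcases hv' with h'' | h''
        · exact huv (h'.trans h''.symm)
        · exact hru (h.trans h'.symm)
        · exact hrv (h.trans h''.symm)
        · exact huv (h'.trans h''.symm)
      have hrxz : r ≠ x + z := by
        intro h
        rcases hu' with h' | h' <;> rcases hv' with h'' | h''
        · exact huv (h'.trans h''.symm)
        · exact hrv (h.trans h''.symm)
        · exact hru (h.trans h'.symm)
        · exact huv (h'.trans h''.symm)
      have hryz : r ≠ y + z := hwr.symm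
      rcases eight hx0 hy0 hz0 hxy hxz hyz hsxyz r with h|h|h|h|h|h|h|h
      · exact absurd h hr0
      · exact absurd h (fun h' => hxr h'.symm)
      · exact absurd h hry
      · exact absurd h hrz
      · exact absurd h hrxy
      · exact absurd h hrxz
      · exact absurd h hryz
      · exact h
    apply hsxwr
    rw [hrfin]
    rw [show x + (y + z) + (x + y + z) = (x + x) + ((y + y) + (z + z)) by abel,
      vadd_self, vadd_self, vadd_self, add_zero, add_zero]
  -- surjectivity of sumOf : Δ → F
  have hsurj : ∀ P : V, P ≠ 0 → ∃ T, T ∈ Δ ∧ sumOf T = P := by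
    have himg : sumOf '' Δ = {P : V | P ≠ 0} := by
      apply Set.eq_of_subset_of_ncard_le
      · rintro _ ⟨T, hT, rfl⟩
        exact hsumNe T hT
      · rw [Set.ncard_image_of_injOn (fun T₁ h₁ T₂ h₂ h => hinj T₁ h₁ T₂ h₂ h), hcard]
        have : ({P : V | P ≠ 0}).ncard = 7 := by
          rw [Set.ncard_eq_toFinset_card']
          decide
        rw [this]
      · exact Set.toFinite _
    intro P hP
    have : P ∈ sumOf '' Δ := by rw [himg]; exact hP
    obtain ⟨T, hT, hTs⟩ := this
    exact ⟨T, hT, hTs⟩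
  choose past hpastΔ hpastsum using fun P hP => hsurj P hP
  have hpast_tri : ∀ P (hP : P ≠ 0), IsTriangle (past P hP) := fun P hP => htri _ (hpastΔ P hP)
  have hpast_not : ∀ P (hP : P ≠ 0), P ∉ past P hP := by
    intro P hP
    have := hsumNM _ (hpastΔ P hP)
    rwa [hpastsum P hP] at this
  have hpast_ne0 : ∀ P (hP : P ≠ 0) Q, Q ∈ past P hP → Q ≠ 0 :=
    fun P hP Q hQ => tri_mem_ne_zero (hpast_tri P hP) hQ
  have hpast_neP : ∀ P (hP : P ≠ 0) Q, Q ∈ past P hP → Q ≠ P :=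
    fun P hP Q hQ h => hpast_not P hP (h ▸ hQ)
  -- (F3a) not both
  have notboth : ∀ P Q (hP : P ≠ 0) (hQ : Q ≠ 0), P ≠ Q →
      Q ∈ past P hP → P ∈ past Q hQ → False := by
    intro P Q hP hQ hPQ hQP hPQm
    have hne : past P hP ≠ past Q hQ := by
      intro h
      apply hPQ
      rw [← hpastsum P hP, ← hpastsum Q hQ, h]
    obtain ⟨t, ⟨ht1, ht2⟩, htu⟩ := hfano.2 _ _ (hpastΔ P hP) (hpastΔ Q hQ) hne
    obtain ⟨a, b, _, ha0, hb0, hQa, hQb, hab, hsQab, hA⟩ := tri_rep_mem (hpast_tri P hP) hQP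
    obtain ⟨c, d, _, hc0, hd0, hPc, hPd, hcd, hsPcd, hB⟩ := tri_rep_mem (hpast_tri Q hQ) hPQm
    have hsA : Q + a + b = P := by
      rw [← hpastsum P hP, hA, sumOf_triple hQa hQb hab]
    have hsB : P + c + d = Q := by
      rw [← hpastsum Q hQ, hB, sumOf_triple hPc hPd hcd]
    have htA := ht1; have htB := ht2
    rw [hA] at htA; rw [hB] at htB
    have htQne : t ≠ Q := fun h => hpast_not Q hQ (h ▸ ht2)
    have htPne : t ≠ P := fun h => hpast_not P hP (h ▸ ht1)
    -- derive memberships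
    have htab : t = a ∨ t = b := by
      rcases htA with h | h | h
      · exact absurd h htQne
      · exact Or.inl h
      · exact Or.inr h
    have htcd : t = c ∨ t = d := by
      rcases htB with h | h | h
      · exact absurd h htPne
      · exact Or.inl h
      · exact Or.inr h
    -- four cases, each via the cancellation trick
    rcases htab with rfl | rfl <;> rcases htcd with h | h
    · -- t = a, t = c : b = d
      have hsB' : P + t + d = Q := by rw [h]; exact hsB
      have hbd : b = d := by
        apply vcancel
        have h2 : (P + Q) + (b + d) = (P + Q) + 0 := by
          rw [add_zero]
          calc (P + Q) + (b + d)
              = (Q + t + b) + (P + t + d) := by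
                rw [show (Q + t + b) + (P + t + d)
                  = (P + Q) + (b + d) + (t + t) by abel, vadd_self, add_zero]
            _ = P + Q := by rw [hsA, hsB']
        exact add_left_cancel h2
      have : b = t := htu b ⟨by rw [hA]; right; right; rfl, by rw [hB, hbd]; right; right; rfl⟩
      exact hab this.symm
    · -- t = a, t = d : b = c
      have hsB' : P + c + t = Q := by rw [h]; exact hsB
      have hbc : b = c := by
        apply vcancel
        have h2 : (P + Q) + (b + c) = (P + Q) + 0 := by
          rw [add_zero]
          calc (P + Q) + (b + c)
              = (Q + t + b) + (P + c + t) := by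
                rw [show (Q + t + b) + (P + c + t)
                  = (P + Q) + (b + c) + (t + t) by abel, vadd_self, add_zero]
            _ = P + Q := by rw [hsA, hsB']
        exact add_left_cancel h2
      have : b = t := htu b ⟨by rw [hA]; right; right; rfl, by rw [hB, ← hbc]; right; left; rfl⟩
      exact hab this.symm
    · -- t = b, t = c : a = d
      have hsB' : P + t + d = Q := by rw [h]; exact hsB
      have had : a = d := by
        apply vcancel
        have h2 : (P + Q) + (a + d) = (P + Q) + 0 := by
          rw [add_zero]
          calc (P + Q) + (a + d)
              = (Q + a + t) + (P + t + d) := by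
                rw [show (Q + a + t) + (P + t + d)
                  = (P + Q) + (a + d) + (t + t) by abel, vadd_self, add_zero]
            _ = P + Q := by rw [hsA, hsB']
        exact add_left_cancel h2
      have : a = t := htu a ⟨by rw [hA]; right; left; rfl, by rw [hB, had]; right; right; rfl⟩
      exact hab this
    · -- t = b, t = d : a = c
      have hsB' : P + c + t = Q := by rw [h]; exact hsB
      have hac : a = c := by
        apply vcancel
        have h2 : (P + Q) + (a + c) = (P + Q) + 0 := by
          rw [add_zero]
          calc (P + Q) + (a + c)
              = (Q + a + t) + (P + c + t) := by
                rw [show (Q + a + t) + (P + c + t)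
                  = (P + Q) + (a + c) + (t + t) by abel, vadd_self, add_zero]
            _ = P + Q := by rw [hsA, hsB']
        exact add_left_cancel h2
      have : a = t := htu a ⟨by rw [hA]; right; left; rfl, by rw [hB, ← hac]; right; left; rfl⟩
      exact hab this
  -- (F3b) at least one
  have atleast : ∀ P Q (hP : P ≠ 0) (hQ : Q ≠ 0), P ≠ Q →
      Q ∉ past P hP → P ∉ past Q hQ → False := by
    intro P Q hP hQ hPQ hnQ hnP
    obtain ⟨a, b, c, ha0, hb0, hc0, hab, hac, hbc, hsabc, hA⟩ := hpast_tri P hP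
    obtain ⟨d, e, f, hd0, he0, hf0, hde, hdf, hef, hsdef, hB⟩ := hpast_tri Q hQ
    have hne : past P hP ≠ past Q hQ := fun h =>
      hPQ (by rw [← hpastsum P hP, ← hpastsum Q hQ, h])
    obtain ⟨t, ⟨ht1, ht2⟩, htu⟩ := hfano.2 _ _ (hpastΔ P hP) (hpastΔ Q hQ) hne
    set Af : Finset V := {a, b, c} with hAf
    set Bf : Finset V := {d, e, f} with hBf
    have hmemA : ∀ w : V, w ∈ Af ↔ w ∈ past P hP := by
      intro w; rw [hA, hAf]; simp
    have hmemB : ∀ w : V, w ∈ Bf ↔ w ∈ past Q hQ := by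
      intro w; rw [hB, hBf]; simp
    have hav : ∀ w ∈ Af ∪ Bf, w ∈ (Finset.univ : Finset V) \ {0, P, Q} := by
      intro w hw
      rw [Finset.mem_sdiff]
      refine ⟨Finset.mem_univ _, ?_⟩
      simp only [Finset.mem_insert, Finset.mem_singleton]
      push_neg
      rcases Finset.mem_union.1 hw with hw | hw
      · have hw' := (hmemA w).1 hw
        exact ⟨hpast_ne0 P hP w hw', hpast_neP P hP w hw', fun h => hnQ (h ▸ hw')⟩
      · have hw' := (hmemB w).1 hw
        exact ⟨hpast_ne0 Q hQ w hw', fun h => hnP (h ▸ hw'), hpast_neP Q hQ w hw'⟩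
    have hint : Af ∩ Bf = {t} := by
      ext w
      simp only [Finset.mem_inter, Finset.mem_singleton]
      constructor
      · rintro ⟨h1, h2⟩; exact htu w ⟨(hmemA w).1 h1, (hmemB w).1 h2⟩
      · rintro rfl; exact ⟨(hmemA _).2 ht1, (hmemB _).2 ht2⟩
    have hcardA : Af.card = 3 := by
      rw [hAf, Finset.card_insert_of_notMem (by simp [hab, hac]),
        Finset.card_insert_of_notMem (by simp [hbc]), Finset.card_singleton]
    have hcardB : Bf.card = 3 := by
      rw [hBf, Finset.card_insert_of_notMem (by simp [hde, hdf]),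
        Finset.card_insert_of_notMem (by simp [hef]), Finset.card_singleton]
    have hcardU : (Af ∪ Bf).card = 5 := by
      have h6 := Finset.card_union_add_card_inter Af Bf
      rw [hint, hcardA, hcardB, Finset.card_singleton] at h6
      omega
    have hcardD : ((Finset.univ : Finset V) \ {0, P, Q}).card = 5 := by
      rw [Finset.card_sdiff_of_subset (Finset.subset_univ _),
        show (Finset.univ : Finset V).card = 8 from by decide,
        Finset.card_insert_of_notMem (by simp [Ne.symm hP, Ne.symm hQ]),
        Finset.card_insert_of_notMem (by simp [hPQ]), Finset.card_singleton]
    have hUD : Af ∪ Bf = (Finset.univ : Finset V) \ {0, P, Q} :=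
      Finset.eq_of_subset_of_card_le (fun w hw => hav w hw) (by rw [hcardU, hcardD])
    have hsAf : ∑ w ∈ Af, w = P := by
      rw [hAf, Finset.sum_insert (by simp [hab, hac]), Finset.sum_pair hbc, ← add_assoc]
      rw [← sumOf_triple hab hac hbc, ← hA, hpastsum P hP]
    have hsBf : ∑ w ∈ Bf, w = Q := by
      rw [hBf, Finset.sum_insert (by simp [hde, hdf]), Finset.sum_pair hef, ← add_assoc]
      rw [← sumOf_triple hde hdf hef, ← hB, hpastsum Q hQ]
    have hvneg : ∀ x : V, -x = x := fun x => neg_eq_of_add_eq_zero_left (vadd_self x)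
    have hsD : ∑ w ∈ (Finset.univ : Finset V) \ {0, P, Q}, w = P + Q := by
      rw [Finset.sum_sdiff_eq_sub (Finset.subset_univ _),
        show ∑ w : V, w = 0 from by decide, zero_sub,
        Finset.sum_insert (by simp [Ne.symm hP, Ne.symm hQ]), Finset.sum_pair hPQ,
        zero_add, hvneg]
    have hkey : ∑ w ∈ Af ∪ Bf, w + ∑ w ∈ Af ∩ Bf, w = ∑ w ∈ Af, w + ∑ w ∈ Bf, w :=
      Finset.sum_union_inter
    rw [hUD, hsD, hint, Finset.sum_singleton, hsAf, hsBf] at hkey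
    have ht0 : t = 0 := by
      have h2 : (P + Q) + t = (P + Q) + 0 := by rw [add_zero]; exact hkey
      exact add_left_cancel h2
    exact (hpast_ne0 P hP t ht1) ht0
  -- exactly-one as a parity statement
  have exctP : ∀ P Q (hP : P ≠ 0) (hQ : Q ≠ 0), P ≠ Q →
      indP (Q ∈ past P hP) + indP (P ∈ past Q hQ) = 1 := by
    intro P Q hP hQ hPQ
    by_cases h1 : Q ∈ past P hP <;> by_cases h2 : P ∈ past Q hQ
    · exact absurd (notboth P Q hP hQ hPQ h1 h2) (by simp)
    · rw [indP_true h1, indP_false h2, add_zero]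
    · rw [indP_false h1, indP_true h2, zero_add]
    · exact absurd (atleast P Q hP hQ hPQ h1 h2) (by simp)
  -- additivity of the indicator of (past P) ∪ {P}
  have hadd : ∀ P (hP : P ≠ 0) (x y : V),
      indP (x + y ∈ insert P (past P hP)) =
        indP (x ∈ insert P (past P hP)) + indP (y ∈ insert P (past P hP)) := by
    intro P hP x y
    obtain ⟨a, b, c, ha, hb, hc, hab, hac, hbc, habc, hrep⟩ := hpast_tri P hP
    have hPsum : a + b + c = P := by
      have := hpastsum P hP
      rwa [hrep, sumOf_triple hab hac hbc] at this
    have hins : insert P (past P hP) = ({a, b, c, a + b + c} : Set V) := by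
      rw [hrep, hPsum]
      ext w
      simp only [Set.mem_insert_iff, Set.mem_singleton_iff]
      tauto
    rw [hins]
    exact indP_coset ha hb hc hab hac hbc habc x y
  have hmem_ins : ∀ P (hP : P ≠ 0) (x : V), x ≠ P →
      indP (x ∈ insert P (past P hP)) = indP (x ∈ past P hP) := by
    intro P hP x hx
    have : (x ∈ insert P (past P hP)) = (x ∈ past P hP) := by
      apply propext
      simp [Set.mem_insert_iff, hx]
    rw [this]
  have hself : ∀ P (hP : P ≠ 0), indP (P ∈ insert P (past P hP)) = 1 :=
    fun P hP => indP_true (Set.mem_insert _ _)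
  -- (PL1) line through P
  have PL1 : ∀ P (hP : P ≠ 0) (C D : V), C ≠ 0 → D ≠ 0 → C ≠ D → C + D = P →
      indP (C ∈ past P hP) + indP (D ∈ past P hP) = 1 := by
    intro P hP C D hC hD hCD hsumP
    have hCP : C ≠ P := by
      intro h
      apply hD
      have : C + D = C + 0 := by rw [add_zero, hsumP, h]
      exact add_left_cancel this
    have hDP : D ≠ P := by
      intro h
      apply hC
      have : C + D = 0 + D := by rw [zero_add, hsumP, h]
      exact add_right_cancel this
    rw [← hmem_ins P hP C hCP, ← hmem_ins P hP D hDP, ← hadd P hP C D, hsumP]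
    exact hself P hP
  -- (PL3)
  have PL3 : ∀ A B (hA : A ≠ 0) (hB : B ≠ 0), A ≠ B →
      indP ((A + B) ∈ past A hA) + indP ((A + B) ∈ past B hB) = 1 := by
    intro A B hA hB hAB
    have h1 : A + B ≠ A := by
      intro h
      exact hB (add_left_cancel (show A + B = A + 0 by rw [add_zero]; exact h))
    have h2 : A + B ≠ B := by
      intro h
      exact hA (add_right_cancel (show A + B = 0 + B by rw [zero_add]; exact h))
    have e1 : indP ((A + B) ∈ past A hA) = 1 + indP (B ∈ past A hA) := by
      rw [← hmem_ins A hA _ h1, hadd A hA A B, hself A hA, hmem_ins A hA B (Ne.symm hAB)]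
    have e2 : indP ((A + B) ∈ past B hB) = indP (A ∈ past B hB) + 1 := by
      rw [← hmem_ins B hB _ h2, hadd B hB A B, hself B hB, hmem_ins B hB A hAB]
    rw [e1, e2]
    have hx := exctP A B hA hB hAB
    calc 1 + indP (B ∈ past A hA) + (indP (A ∈ past B hB) + 1)
        = indP (B ∈ past A hA) + indP (A ∈ past B hB) + (1 + 1) := by ring
      _ = 1 := by
          rw [hx, show (1 : ZMod 2) + 1 = 0 from by decide, add_zero]
  -- (PQ) quadrilateral parity
  have PQ : ∀ A B C D (hA : A ≠ 0) (hB : B ≠ 0), A ≠ B → C ≠ A → D ≠ A → C ≠ B → D ≠ B →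
      C ≠ D → A + B = C + D →
      indP (C ∈ past A hA) + indP (D ∈ past A hA)
        + indP (C ∈ past B hB) + indP (D ∈ past B hB) = 1 := by
    intro A B C D hA hB hAB hCA hDA hCB hDB hCD hsumq
    have e1 : indP (C ∈ past A hA) + indP (D ∈ past A hA) = 1 + indP (B ∈ past A hA) := by
      rw [← hmem_ins A hA C hCA, ← hmem_ins A hA D hDA, ← hadd A hA C D, ← hsumq,
        hadd A hA A B, hself A hA, hmem_ins A hA B (Ne.symm hAB)]
    have e2 : indP (C ∈ past B hB) + indP (D ∈ past B hB) = 1 + indP (A ∈ past B hB) := by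
      rw [← hmem_ins B hB C hCB, ← hmem_ins B hB D hDB, ← hadd B hB C D, ← hsumq,
        hadd B hB A B, hself B hB, hmem_ins B hB A hAB, add_comm]
    have hx := exctP A B hA hB hAB
    calc indP (C ∈ past A hA) + indP (D ∈ past A hA)
          + indP (C ∈ past B hB) + indP (D ∈ past B hB)
        = (indP (C ∈ past A hA) + indP (D ∈ past A hA))
          + (indP (C ∈ past B hB) + indP (D ∈ past B hB)) := by ring
      _ = (1 + indP (B ∈ past A hA)) + (1 + indP (A ∈ past B hB)) := by rw [e1, e2]
      _ = indP (B ∈ past A hA) + indP (A ∈ past B hB) + (1 + 1) := by ring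
      _ = 1 := by
          rw [hx, show (1 : ZMod 2) + 1 = 0 from by decide, add_zero]
  -- the multiplication factor
  set ε₀ : V → V → ℤ := fun P Q =>
    if h : P ≠ 0 ∧ Q ≠ 0 ∧ P ≠ Q then (if Q ∈ past P h.1 then -1 else 1) else 0 with hε₀
  have hval : ∀ P Q (hP : P ≠ 0) (hQ : Q ≠ 0) (hPQ : P ≠ Q),
      ε₀ P Q = if Q ∈ past P hP then -1 else 1 := by
    intro P Q hP hQ hPQ
    rw [hε₀]
    simp only
    rw [dif_pos ⟨hP, hQ, hPQ⟩]
  have hval0 : ∀ P Q : V, ¬(P ≠ 0 ∧ Q ≠ 0 ∧ P ≠ Q) → ε₀ P Q = 0 := by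
    intro P Q h
    rw [hε₀]
    simp only
    rw [dif_neg h]
  have hmf₀ : IsMulFactor ε₀ := by
    constructor
    · intro P Q hP hQ hPQ
      rw [hval P Q hP hQ hPQ, hval Q P hQ hP (Ne.symm hPQ)]
      constructor
      · by_cases h : Q ∈ past P hP
        · rw [if_pos h]; right; rfl
        · rw [if_neg h]; left; rfl
      · by_cases h1 : Q ∈ past P hP <;> by_cases h2 : P ∈ past Q hQ
        · exact absurd (notboth P Q hP hQ hPQ h1 h2) (by simp)
        · rw [if_pos h1, if_neg h2] <;> ring
        · rw [if_neg h1, if_pos h2] <;> ring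
        · exact absurd (atleast P Q hP hQ hPQ h1 h2) (by simp)
    · intro P Q h
      apply hval0
      tauto
  -- condition (H)
  have hH : ∀ A B C D : V, A ≠ B → A + B = C + D →
      cInt ε₀ A C * cInt ε₀ B D + cInt ε₀ A D * cInt ε₀ B C = 0 := by
    intro A B C D hAB hsum
    have hCD : C ≠ D := by
      intro h
      apply hAB
      apply vcancel
      rw [hsum, h, vadd_self]
    have hcv : ∀ P Q (hP : P ≠ 0) (hQ : Q ≠ 0) (hPQ : P ≠ Q),
        cInt ε₀ P Q = if Q ∈ past P hP then -1 else 1 := by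
      intro P Q hP hQ hPQ
      unfold cInt
      rw [if_neg (by push_neg; exact ⟨hP, hQ⟩), if_neg hPQ, hval P Q hP hQ hPQ]
    by_cases hA0 : A = 0
    · subst hA0
      have hB0 : B ≠ 0 := Ne.symm hAB
      have hBCD : B = C + D := by rw [← hsum, zero_add]
      have e0C : cInt ε₀ 0 C = 1 := by unfold cInt; simp
      have e0D : cInt ε₀ 0 D = 1 := by unfold cInt; simp
      rw [e0C, e0D, one_mul, one_mul]
      by_cases hC0 : C = 0
      · have hDB : D = B := by rw [hBCD, hC0, zero_add]
        rw [hC0, hDB, show cInt ε₀ B B = -1 from by unfold cInt; simp [hB0],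
          show cInt ε₀ B 0 = 1 from by unfold cInt; simp] <;> ring
      · by_cases hD0 : D = 0
        · have hCB : C = B := by rw [hBCD, hD0, add_zero]
          rw [hD0, hCB, show cInt ε₀ B B = -1 from by unfold cInt; simp [hB0],
            show cInt ε₀ B 0 = 1 from by unfold cInt; simp] <;> ring
        · have hBC : B ≠ C := by
            intro h
            apply hD0
            have : C + D = C + 0 := by rw [add_zero, ← hBCD, h]
            exact add_left_cancel this
          have hBD : B ≠ D := by
            intro h
            apply hC0
            have : C + D = 0 + D := by rw [zero_add, ← hBCD, h]
            exact add_right_cancel this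
          rw [hcv B D hB0 hD0 hBD, hcv B C hB0 hC0 hBC, add_comm]
          exact sign2 (PL1 B hB0 C D hC0 hD0 hCD hBCD.symm)
    · by_cases hB0 : B = 0
      · subst hB0
        have hACD : A = C + D := by rw [← hsum, add_zero]
        have e0C : cInt ε₀ 0 C = 1 := by unfold cInt; simp
        have e0D : cInt ε₀ 0 D = 1 := by unfold cInt; simp
        rw [e0C, e0D, mul_one, mul_one]
        by_cases hC0 : C = 0
        · have hDA : D = A := by rw [hACD, hC0, zero_add]
          rw [hC0, hDA, show cInt ε₀ A A = -1 from by unfold cInt; simp [hA0],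
            show cInt ε₀ A 0 = 1 from by unfold cInt; simp] <;> ring
        · by_cases hD0 : D = 0
          · have hCA : C = A := by rw [hACD, hD0, add_zero]
            rw [hD0, hCA, show cInt ε₀ A A = -1 from by unfold cInt; simp [hA0],
              show cInt ε₀ A 0 = 1 from by unfold cInt; simp] <;> ring
          · have hAC : A ≠ C := by
              intro h
              apply hD0
              have : C + D = C + 0 := by rw [add_zero, ← hACD, h]
              exact add_left_cancel this
            have hAD : A ≠ D := by
              intro h
              apply hC0
              have : C + D = 0 + D := by rw [zero_add, ← hACD, h]
              exact add_right_cancel this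
            rw [hcv A C hA0 hC0 hAC, hcv A D hA0 hD0 hAD]
            exact sign2 (PL1 A hA0 C D hC0 hD0 hCD hACD.symm)
      · have hE0 : A + B ≠ 0 := fun h => hAB (vcancel h)
        by_cases hC0 : C = 0
        · have hDE : D = A + B := by rw [hsum, hC0, zero_add]
          have hAD : A ≠ D := by
            intro h
            apply hB0
            exact add_left_cancel (show A + B = A + 0 by rw [add_zero, ← hDE]; exact h.symm)
          have hBD : B ≠ D := by
            intro h
            apply hA0
            exact add_right_cancel (show A + B = 0 + B by rw [zero_add, ← hDE]; exact h.symm)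
          have hD0 : D ≠ 0 := by rw [hDE]; exact hE0
          have eA0 : cInt ε₀ A 0 = 1 := by unfold cInt; simp
          have eB0 : cInt ε₀ B 0 = 1 := by unfold cInt; simp
          rw [hC0, eA0, eB0, one_mul, mul_one]
          rw [hcv B D hB0 hD0 hBD, hcv A D hA0 hD0 hAD]
          apply sign2
          rw [add_comm]
          have := PL3 A B hA0 hB0 hAB
          rw [show A + B = D from hDE.symm] at this
          exact this
        · by_cases hD0 : D = 0
          · have hCE : C = A + B := by rw [hsum, hD0, add_zero]
            have hAC : A ≠ C := by
              intro h
              apply hB0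
              exact add_left_cancel (show A + B = A + 0 by rw [add_zero, ← hCE]; exact h.symm)
            have hBC : B ≠ C := by
              intro h
              apply hA0
              exact add_right_cancel (show A + B = 0 + B by rw [zero_add, ← hCE]; exact h.symm)
            have hC0' : C ≠ 0 := by rw [hCE]; exact hE0
            have eA0 : cInt ε₀ A 0 = 1 := by unfold cInt; simp
            have eB0 : cInt ε₀ B 0 = 1 := by unfold cInt; simp
            rw [hD0, eA0, eB0, mul_one, one_mul]
            rw [hcv A C hA0 hC0' hAC, hcv B C hB0 hC0' hBC]
            apply sign2
            have := PL3 A B hA0 hB0 hAB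
            rw [show A + B = C from hCE.symm] at this
            exact this
          · by_cases hAC : A = C
            · have hBD : B = D := by
                apply add_left_cancel (a := A)
                rw [hsum, hAC]
              subst hAC; subst hBD
              have eAA : cInt ε₀ A A = -1 := by unfold cInt; simp [hA0]
              have eBB : cInt ε₀ B B = -1 := by unfold cInt; simp [hB0]
              rw [eAA, eBB, hcv A B hA0 hB0 hAB, hcv B A hB0 hA0 (Ne.symm hAB)]
              by_cases h1 : B ∈ past A hA0 <;> by_cases h2 : A ∈ past B hB0
              · exact absurd (notboth A B hA0 hB0 hAB h1 h2) (by simp)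
              · rw [if_pos h1, if_neg h2] <;> ring
              · rw [if_neg h1, if_pos h2] <;> ring
              · exact absurd (atleast A B hA0 hB0 hAB h1 h2) (by simp)
            · by_cases hAD : A = D
              · have hBC : B = C := by
                  apply add_left_cancel (a := A)
                  rw [hsum, hAD, add_comm C D]
                subst hAD; subst hBC
                have eAA : cInt ε₀ A A = -1 := by unfold cInt; simp [hA0]
                have eBB : cInt ε₀ B B = -1 := by unfold cInt; simp [hB0]
                rw [eAA, eBB, hcv A B hA0 hB0 hAB, hcv B A hB0 hA0 (Ne.symm hAB)]
                by_cases h1 : B ∈ past A hA0 <;> by_cases h2 : A ∈ past B hB0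
                · exact absurd (notboth A B hA0 hB0 hAB h1 h2) (by simp)
                · rw [if_pos h1, if_neg h2] <;> ring
                · rw [if_neg h1, if_pos h2] <;> ring
                · exact absurd (atleast A B hA0 hB0 hAB h1 h2) (by simp)
              · have hBC : B ≠ C := by
                  intro h
                  apply hAD
                  apply add_right_cancel (b := B)
                  rw [hsum, ← h, add_comm]
                have hBD : B ≠ D := by
                  intro h
                  apply hAC
                  apply add_right_cancel (b := B)
                  rw [hsum, ← h]
                rw [hcv A C hA0 hC0 hAC, hcv B D hB0 hD0 hBD,
                  hcv A D hA0 hD0 hAD, hcv B C hB0 hC0 hBC]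
                have hq := PQ A B C D hA0 hB0 hAB (Ne.symm hAC) (Ne.symm hAD)
                  (Ne.symm hBC) (Ne.symm hBD) hCD hsum
                exact sign4 (by linear_combination hq)
  -- the composition algebra
  have hca₀ : IsCompAlg 𝔽 (fun _ => 1) ε₀ := comp_of_H hmf₀ hH
  -- pasts of ε₀
  have hpast₀ : ∀ P (hP : P ≠ 0), Past ε₀ P = past P hP := by
    intro P hP
    ext Q
    simp only [Past, Set.mem_setOf_eq]
    constructor
    · rintro ⟨hQ0, hQP, hvm⟩
      rw [hval P Q hP hQ0 (Ne.symm hQP)] at hvm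
      by_cases h : Q ∈ past P hP
      · exact h
      · rw [if_neg h] at hvm
        exact absurd hvm (by decide)
    · intro h
      refine ⟨hpast_ne0 P hP Q h, hpast_neP P hP Q h, ?_⟩
      rw [hval P Q hP (hpast_ne0 P hP Q h) (Ne.symm (hpast_neP P hP Q h)), if_pos h]
  have hΔ₀ : Δ = {S : Set V | ∃ P : V, P ≠ 0 ∧ S = Past ε₀ P} := by
    ext T
    simp only [Set.mem_setOf_eq]
    constructor
    · intro hT
      refine ⟨sumOf T, hsumNe T hT, ?_⟩
      rw [hpast₀ _ (hsumNe T hT)]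
      exact (hinj _ (hpastΔ _ (hsumNe T hT)) _ hT (hpastsum _ (hsumNe T hT))).symm
    · rintro ⟨P, hP, rfl⟩
      rw [hpast₀ P hP]
      exact hpastΔ P hP
  refine ⟨ε₀, ⟨hmf₀, hca₀, hΔ₀⟩, ?_⟩
  -- uniqueness
  rintro ε' ⟨hmf', hca', hΔ'⟩
  have key : ∀ P (hP : P ≠ 0), Past ε' P = past P hP := by
    intro P hP
    have hmem : Past ε' P ∈ Δ := by rw [hΔ']; exact ⟨P, hP, rfl⟩
    have htriP := htri _ hmem
    have hPa : ∀ x, x ∈ Past ε' P → ε' P x = -1 ∧ x ≠ P ∧ x ≠ 0 :=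
      fun x hx => ⟨hx.2.2, hx.2.1, hx.1⟩
    have hsum' : sumOf (Past ε' P) = P := by
      obtain ⟨a, b, c, ha, hb, hc, hab, hac, hbc, hs3, hrep⟩ := htriP
      have hma : a ∈ Past ε' P := by rw [hrep]; left; rfl
      have hmb : b ∈ Past ε' P := by rw [hrep]; right; left; rfl
      have hmc : c ∈ Past ε' P := by rw [hrep]; right; right; rfl
      have hnot2 : ∀ x y : V, x ∈ Past ε' P → y ∈ Past ε' P → x ≠ y → P ≠ x + y := by
        intro x y hx hy hxy h
        have hPx : P ≠ x := Ne.symm (hPa x hx).2.1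
        have hel := eps_line hchar hmf' hca' hP (hPa x hx).2.2 hPx
        have hyx : P + x = y := by
          rw [h, show x + y + x = y + (x + x) by abel, vadd_self, add_zero]
        rw [hyx, (hPa x hx).1, (hPa y hy).1] at hel
        norm_num at hel
      rw [hrep, sumOf_triple hab hac hbc]
      rcases eight ha hb hc hab hac hbc hs3 P with h|h|h|h|h|h|h|h
      · exact absurd h hP
      · exact absurd h.symm (hPa a hma).2.1
      · exact absurd h.symm (hPa b hmb).2.1
      · exact absurd h.symm (hPa c hmc).2.1
      · exact absurd h (hnot2 a b hma hmb hab)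
      · exact absurd h (hnot2 a c hma hmc hac)
      · exact absurd h (hnot2 b c hmb hmc hbc)
      · exact h.symm
    exact hinj _ hmem _ (hpastΔ P hP) (by rw [hsum', hpastsum P hP])
  funext P Q
  by_cases h : P ≠ 0 ∧ Q ≠ 0 ∧ P ≠ Q
  · obtain ⟨hP, hQ, hPQ⟩ := h
    rw [hval P Q hP hQ hPQ]
    by_cases hm : Q ∈ past P hP
    · have hm' : Q ∈ Past ε' P := by rw [key P hP]; exact hm
      rw [if_pos hm]
      exact hm'.2.2
    · have hm' : Q ∉ Past ε' P := by rw [key P hP]; exact hm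
      rcases (hmf'.1 P Q hP hQ hPQ).1 with h1 | h1
      · rw [if_neg hm, h1]
      · exact absurd ⟨hQ, fun he => hPQ he.symm, h1⟩ hm'
  · have h0' : P = 0 ∨ Q = 0 ∨ P = Q := by tauto
    rw [hmf'.2 P Q h0', hval0 P Q h]
end

section
/- Let (O_F, 1, ε) be a composition algebra, let n′ be a nonzero linear form on V, and define the multiplication factor ε′ by ε′_{PQ} = e^{n′(P)·n′(Q)} ε_{PQ} for distinct P,Q ∈ F. (i) If the ε-future of every point of F is a line, then there is exactly one point P ∈ F whose ε′-future equals F \ {P}, namely the unique point P whose ε-future equals {Q ∈ F : n′(Q) = 0}. (ii) If the ε-past of every point of F is a line, then there is exactly one point P ∈ F whose ε′-past equals F \ {P}, namely the unique point P whose ε-past equals {Q ∈ F : n′(Q) = 0}. -/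
open Finset

lemma zcases (x : ZMod 2) : x = 0 ∨ x = 1 := by revert x; decide

lemma eSign_zero : eSign 0 = 1 := rfl

lemma eSign_one : eSign 1 = -1 := rfl

lemma pts_card' : ((univ : Finset V).filter (fun P : V => P ≠ 0)).card = 7 := by decide

lemma lns_card' : ((univ : Finset (Finset V)).filter
    (fun s : Finset V => s.card = 3 ∧ (0:V) ∉ s ∧ s.sum id = 0)).card = 7 := by decide

lemma ker_line : ∀ c : Fin 3 → ZMod 2, c ≠ 0 →
    ((univ : Finset V).filter (fun Q : V => Q ≠ 0 ∧ ∑ i, Q i * c i = 0)).card = 3 ∧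
    (0:V) ∉ ((univ : Finset V).filter (fun Q : V => Q ≠ 0 ∧ ∑ i, Q i * c i = 0)) ∧
    (((univ : Finset V).filter (fun Q : V => Q ≠ 0 ∧ ∑ i, Q i * c i = 0)).sum id = 0) := by
  decide

lemma nform (n' : V →ₗ[ZMod 2] ZMod 2) (x : V) :
    n' x = ∑ i, x i * n' (Pi.single i 1) := by
  conv_lhs => rw [pi_eq_sum_univ x]
  rw [map_sum]
  refine Finset.sum_congr rfl fun i _ => ?_
  rw [map_smul, smul_eq_mul]
  congr 1
  apply congrArg
  funext j
  simp [Pi.single_apply, eq_comm]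

lemma exists_fresh (a b c d : V) :
    ∃ Q : V, Q ≠ 0 ∧ Q ≠ a ∧ Q ≠ b ∧ Q ≠ c ∧ Q ≠ d := by
  by_contra h
  push_neg at h
  have hsub : (univ : Finset V) ⊆ {0, a, b, c, d} := by
    intro x _
    simp only [Finset.mem_insert, Finset.mem_singleton]
    by_contra hx
    push_neg at hx
    exact hx.2.2.2.2 (h x hx.1 hx.2.1 hx.2.2.1 hx.2.2.2.1)
  have h1 := Finset.card_le_card hsub
  have h2 : ({0, a, b, c, d} : Finset V).card ≤ 5 := by
    refine le_trans (Finset.card_insert_le _ _) ?_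
    have i1 := Finset.card_insert_le a ({b, c, d} : Finset V)
    have i2 := Finset.card_insert_le b ({c, d} : Finset V)
    have i3 := Finset.card_insert_le c ({d} : Finset V)
    have i4 : ({d} : Finset V).card = 1 := Finset.card_singleton d
    omega
  have h3 : (univ : Finset V).card = 8 := by decide
  omega

lemma mem_future {ε : V → V → ℤ} {P Q : V} :
    Q ∈ Future ε P ↔ Q ≠ 0 ∧ Q ≠ P ∧ ε P Q = 1 := Iff.rfl

lemma main_future (ε ε' : V → V → ℤ) (hε : IsMulFactor ε) (hε' : IsMulFactor ε')
    (n' : V →ₗ[ZMod 2] ZMod 2) (hn' : n' ≠ 0)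
    (hrel : ∀ P Q : V, P ≠ 0 → Q ≠ 0 → P ≠ Q →
      ε' P Q = eSign (n' P * n' Q) * ε P Q)
    (hl : ∀ P : V, P ≠ 0 → IsLine (Future ε P)) :
    (∃! P : V, P ≠ 0 ∧ Future ε' P = {Q : V | Q ≠ 0 ∧ Q ≠ P}) ∧
    (∀ P : V, P ≠ 0 →
      (Future ε' P = {Q : V | Q ≠ 0 ∧ Q ≠ P} ↔
        Future ε P = {Q : V | Q ≠ 0 ∧ n' Q = 0})) := by
  classical
  -- the pointwise iff
  have hiff : ∀ P : V, P ≠ 0 →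
      (Future ε' P = {Q : V | Q ≠ 0 ∧ Q ≠ P} ↔
        Future ε P = {Q : V | Q ≠ 0 ∧ n' Q = 0}) := by
    intro P hP
    constructor
    · -- forward direction
      intro h
      have hnP : n' P = 1 := by
        rcases zcases (n' P) with h0 | h1
        · exfalso
          obtain ⟨A, B, C, hA, hB, hC, hAB, hAC, hBC, hsum, hline⟩ := hl P hP
          obtain ⟨Q, hQ0, hQP, hQA, hQB, hQC⟩ := exists_fresh P A B C
          have hQmem : Q ∈ Future ε' P := by rw [h]; exact ⟨hQ0, hQP⟩
          obtain ⟨-, -, he'⟩ := mem_future.mp hQmem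
          have heq : ε P Q = 1 := by
            have hr := hrel P Q hP hQ0 (Ne.symm hQP)
            rw [h0, zero_mul, eSign_zero, one_mul] at hr
            omega
          have : Q ∈ Future ε P := mem_future.mpr ⟨hQ0, hQP, heq⟩
          rw [hline] at this
          rcases this with h' | h' | h' <;> [exact hQA h'; exact hQB h'; exact hQC h']
        · exact h1
      ext Q
      simp only [Set.mem_setOf_eq]
      constructor
      · rintro ⟨hQ0, hQP, heq⟩
        refine ⟨hQ0, ?_⟩
        rcases zcases (n' Q) with hq0 | hq1
        · exact hq0
        · exfalso
          have hQmem : Q ∈ Future ε' P := by rw [h]; exact ⟨hQ0, hQP⟩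
          obtain ⟨-, -, he'⟩ := mem_future.mp hQmem
          have hr := hrel P Q hP hQ0 (Ne.symm hQP)
          rw [hnP, hq1, heq, one_mul, eSign_one, mul_one] at hr
          omega
      · rintro ⟨hQ0, hq0⟩
        have hQP : Q ≠ P := by
          intro he; rw [he, hnP] at hq0; exact one_ne_zero hq0
        refine ⟨hQ0, hQP, ?_⟩
        have hQmem : Q ∈ Future ε' P := by rw [h]; exact ⟨hQ0, hQP⟩
        obtain ⟨-, -, he'⟩ := mem_future.mp hQmem
        have hr := hrel P Q hP hQ0 (Ne.symm hQP)
        rw [hnP, hq0, mul_zero, eSign_zero, one_mul] at hr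
        omega
    · -- backward direction
      intro h
      have hnP : n' P = 1 := by
        rcases zcases (n' P) with h0 | h1
        · exfalso
          have : P ∈ Future ε P := by rw [h]; exact ⟨hP, h0⟩
          exact (mem_future.mp this).2.1 rfl
        · exact h1
      ext Q
      simp only [Set.mem_setOf_eq]
      constructor
      · rintro ⟨hQ0, hQP, -⟩
        exact ⟨hQ0, hQP⟩
      · rintro ⟨hQ0, hQP⟩
        refine ⟨hQ0, hQP, ?_⟩
        have hr := hrel P Q hP hQ0 (Ne.symm hQP)
        rcases zcases (n' Q) with hq0 | hq1
        · have : Q ∈ Future ε P := by rw [h]; exact ⟨hQ0, hq0⟩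
          obtain ⟨-, -, he⟩ := mem_future.mp this
          rw [hnP, hq0, mul_zero, eSign_zero, one_mul, he] at hr
          omega
        · have hnotm : Q ∉ Future ε P := by
            rw [h]; rintro ⟨-, hc⟩; rw [hq1] at hc; exact one_ne_zero hc
          have he : ε P Q = -1 := by
            rcases (hε.1 P Q hP hQ0 (Ne.symm hQP)).1 with h1 | h1
            · exact absurd (mem_future.mpr ⟨hQ0, hQP, h1⟩) hnotm
            · exact h1
          rw [hnP, hq1, mul_one, eSign_one, he] at hr
          norm_num at hr
          omega
  -- existence
  have hex : ∃ P : V, P ≠ 0 ∧ Future ε P = {Q : V | Q ≠ 0 ∧ n' Q = 0} := by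
    set f : V → Finset V :=
      fun P => (univ : Finset V).filter (fun Q => Q ≠ 0 ∧ Q ≠ P ∧ ε P Q = 1) with hf
    set Pts : Finset V := (univ : Finset V).filter (fun P : V => P ≠ 0) with hPts
    set Lns : Finset (Finset V) := (univ : Finset (Finset V)).filter
      (fun s : Finset V => s.card = 3 ∧ (0:V) ∉ s ∧ s.sum id = 0) with hLns
    have hmemf : ∀ P Q : V, Q ∈ f P ↔ Q ∈ Future ε P := by
      intro P Q
      simp only [hf, Finset.mem_filter, Finset.mem_univ, true_and]
      exact Iff.rfl
    have hmaps : ∀ P ∈ Pts, f P ∈ Lns := by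
      intro P hPm
      have hP : P ≠ 0 := (Finset.mem_filter.mp hPm).2
      obtain ⟨A, B, C, hA, hB, hC, hAB, hAC, hBC, hsum, hline⟩ := hl P hP
      have hfP : f P = {A, B, C} := by
        ext q
        rw [hmemf, hline]
        simp [Set.mem_insert_iff]
      rw [hfP]
      simp only [hLns, Finset.mem_filter, Finset.mem_univ, true_and]
      refine ⟨?_, ?_, ?_⟩
      · rw [Finset.card_insert_of_notMem (by simp [hAB, hAC]),
          Finset.card_insert_of_notMem (by simp [hBC]), Finset.card_singleton]
      · simp only [Finset.mem_insert, Finset.mem_singleton]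
        push_neg
        exact ⟨Ne.symm hA, Ne.symm hB, Ne.symm hC⟩
      · rw [Finset.sum_insert (by simp [hAB, hAC]),
          Finset.sum_insert (by simp [hBC]), Finset.sum_singleton]
        simpa [add_assoc] using hsum
    have hinj : Set.InjOn f Pts := by
      intro P hPm P' hP'm hfe
      by_contra hne
      have hP : P ≠ 0 := (Finset.mem_filter.mp hPm).2
      have hP' : P' ≠ 0 := (Finset.mem_filter.mp hP'm).2
      obtain ⟨hsgn, hanti⟩ := hε.1 P P' hP hP' hne
      rcases hsgn with h1 | h1
      · have : P' ∈ f P := by rw [hmemf]; exact ⟨hP', Ne.symm hne, h1⟩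
        rw [hfe, hmemf] at this
        exact this.2.1 rfl
      · have h2 : ε P' P = 1 := by rw [hanti, h1]; norm_num
        have : P ∈ f P' := by rw [hmemf]; exact ⟨hP, hne, h2⟩
        rw [← hfe, hmemf] at this
        exact this.2.1 rfl
    have himg : Pts.image f = Lns := by
      apply Finset.eq_of_subset_of_card_le
      · intro s hs
        obtain ⟨P, hPm, rfl⟩ := Finset.mem_image.mp hs
        exact hmaps P hPm
      · rw [Finset.card_image_of_injOn hinj]
        rw [hPts, hLns, pts_card', lns_card']
    -- K as a finset is a line
    set c : Fin 3 → ZMod 2 := fun i => n' (Pi.single i 1) with hc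
    have hc0 : c ≠ 0 := by
      intro h0
      apply hn'
      apply LinearMap.ext
      intro x
      rw [nform n' x]
      have hz : ∀ i, n' (Pi.single i 1) = 0 := fun i => congrFun h0 i
      simp [hz]
    set Kf : Finset V := (univ : Finset V).filter (fun Q : V => Q ≠ 0 ∧ n' Q = 0)
      with hKf
    have hKeq : Kf = (univ : Finset V).filter
        (fun Q : V => Q ≠ 0 ∧ ∑ i, Q i * c i = 0) := by
      apply Finset.filter_congr
      intro Q _
      rw [nform n' Q]
    have hKmem : Kf ∈ Lns := by
      obtain ⟨hcard, h0m, hsum⟩ := ker_line c hc0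
      simp only [hLns, Finset.mem_filter, Finset.mem_univ, true_and]
      rw [hKeq]
      exact ⟨hcard, h0m, hsum⟩
    rw [← himg] at hKmem
    obtain ⟨P, hPm, hfP⟩ := Finset.mem_image.mp hKmem
    refine ⟨P, (Finset.mem_filter.mp hPm).2, ?_⟩
    ext Q
    constructor
    · intro hQ
      have : Q ∈ f P := (hmemf P Q).mpr hQ
      rw [hfP, hKf, Finset.mem_filter] at this
      exact this.2
    · intro hQ
      have : Q ∈ Kf := by
        rw [hKf, Finset.mem_filter]
        exact ⟨Finset.mem_univ Q, hQ⟩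
      rw [← hfP, hmemf] at this
      exact this
  obtain ⟨P₀, hP₀, hFut₀⟩ := hex
  refine ⟨⟨P₀, ⟨hP₀, (hiff P₀ hP₀).mpr hFut₀⟩, ?_⟩, hiff⟩
  rintro P₁ ⟨hP₁, hFut₁⟩
  by_contra hne
  have hFut₀' := (hiff P₀ hP₀).mpr hFut₀
  have h1 : P₀ ∈ Future ε' P₁ := by rw [hFut₁]; exact ⟨hP₀, Ne.symm hne⟩
  have h2 : P₁ ∈ Future ε' P₀ := by rw [hFut₀']; exact ⟨hP₁, hne⟩
  obtain ⟨-, -, he1⟩ := mem_future.mp h1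
  obtain ⟨-, -, he2⟩ := mem_future.mp h2
  have := (hε'.1 P₁ P₀ hP₁ hP₀ hne).2
  omega

lemma mulfactor_transpose (ε : V → V → ℤ) (hε : IsMulFactor ε) :
    IsMulFactor (fun P Q => ε Q P) := by
  constructor
  · intro P Q hP hQ hne
    obtain ⟨h1, h2⟩ := hε.1 Q P hQ hP (Ne.symm hne)
    exact ⟨h1, h2⟩
  · intro P Q h
    apply hε.2
    tauto

lemma past_eq_future (ε : V → V → ℤ) (hε : IsMulFactor ε) :
    Past ε = Future (fun P Q => ε Q P) := by
  funext P
  ext Q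
  simp only [Past, Future, Set.mem_setOf_eq]
  constructor
  · rintro ⟨hQ0, hQP, he⟩
    refine ⟨hQ0, hQP, ?_⟩
    have hP : P ≠ 0 := by
      intro h0
      rw [hε.2 P Q (Or.inl h0)] at he
      norm_num at he
    have := (hε.1 P Q hP hQ0 (Ne.symm hQP)).2
    omega
  · rintro ⟨hQ0, hQP, he⟩
    refine ⟨hQ0, hQP, ?_⟩
    have hP : P ≠ 0 := by
      intro h0
      rw [hε.2 Q P (Or.inr (Or.inl h0))] at he
      norm_num at he
    have := (hε.1 P Q hP hQ0 (Ne.symm hQP)).2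
    omega

/-- let `(O_F, 1, ε)` be a composition algebra, `n′ ≠ 0` a linear form, and
`ε′_{PQ} = e^{n′(P)n′(Q)} ε_{PQ}`. (i) If every `ε`-future is a line, there is exactly one
point `P` with `ε′`-future `F \ {P}`, namely the unique `P` whose `ε`-future is `Ker n′ ∩ F`;
(ii) likewise for pasts. -/
theorem stmt_18 (𝔽 : Type*) [Field 𝔽] (hchar : (2 : 𝔽) ≠ 0)
    (ε ε' : V → V → ℤ) (hε : IsMulFactor ε) (hε' : IsMulFactor ε')
    (hcomp : IsCompAlg 𝔽 (fun _ => 1) ε)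
    (n' : V →ₗ[ZMod 2] ZMod 2) (hn' : n' ≠ 0)
    (hrel : ∀ P Q : V, P ≠ 0 → Q ≠ 0 → P ≠ Q →
      ε' P Q = eSign (n' P * n' Q) * ε P Q) :
    ((∀ P : V, P ≠ 0 → IsLine (Future ε P)) →
      (∃! P : V, P ≠ 0 ∧ Future ε' P = {Q : V | Q ≠ 0 ∧ Q ≠ P}) ∧
      (∀ P : V, P ≠ 0 →
        (Future ε' P = {Q : V | Q ≠ 0 ∧ Q ≠ P} ↔
          Future ε P = {Q : V | Q ≠ 0 ∧ n' Q = 0}))) ∧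
    ((∀ P : V, P ≠ 0 → IsLine (Past ε P)) →
      (∃! P : V, P ≠ 0 ∧ Past ε' P = {Q : V | Q ≠ 0 ∧ Q ≠ P}) ∧
      (∀ P : V, P ≠ 0 →
        (Past ε' P = {Q : V | Q ≠ 0 ∧ Q ≠ P} ↔
          Past ε P = {Q : V | Q ≠ 0 ∧ n' Q = 0}))) := by
  have hrel' : ∀ P Q : V, P ≠ 0 → Q ≠ 0 → P ≠ Q →
      ε' Q P = eSign (n' P * n' Q) * ε Q P := by
    intro P Q hP hQ hne
    rw [hrel Q P hQ hP (Ne.symm hne), mul_comm (n' Q)]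
  constructor
  · intro hl
    exact main_future ε ε' hε hε' n' hn' hrel hl
  · intro hl
    rw [past_eq_future ε hε] at hl
    rw [past_eq_future ε' hε', past_eq_future ε hε]
    exact main_future _ _ (mulfactor_transpose ε hε) (mulfactor_transpose ε' hε')
      n' hn' hrel' hl
end
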